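/- Let q ≥ 2 be an integer and work with Λ(r) for P = q (i.e., 𝔭 = T, level 𝔫 = T^r). Let r ≥ 4. Letting e_0, …, e_r denote the standard basis of ℚ^{r+1}, one has Λ(r)·( −q·e_0 + e_1 + e_{r−2} − e_{r−1} + (q−1)·e_r ) = (q²−1)(q−1)·d, where d = −(Σ_{k=0}^{r−2} q^k)·e_0 + e_1 + Σ_{k=2}^{⌊r/2⌋} e_k + Σ_{k=⌊r/2⌋+1}^{r−2} q^{2k−r}·e_k + q^{r−2}·e_r. (In the paper: the identity g(D_1) = (Δ^{−q} Δ_T Δ_{T^{r−2}} Δ_{T^{r−1}}^{−1} Δ_{T^r}^{q−1})^{1/((q²−1)(q−1))}, where D_1 = C_1 − Σ_{k=0}^{r−2} q^k C_0 + Σ_{k=2}^{⌊r/2⌋} C_k + Σ_{k=⌊r/2⌋+1}^{r−2} q^{2k−r} C_k; it shows (q−1)D_1 is trivial in C(T^r).) -/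

import Mathlib

/-- The transpose of the matrix `Λ(r)`: for `0 ≤ i, j ≤ r`, the `(i,j)`-entry of `Λ(r)ᵀ`
is `P^(r-i)` if `j = 0`, `P^i` if `j = r`, and `P^(r - min(j, r-j) - |i-j|) * (q-1)`
for `1 ≤ j ≤ r-1`, where `P = q^e`. -/
def lambdaT (q e r : ℕ) : Matrix (Fin (r + 1)) (Fin (r + 1)) ℚ := fun i j =>
  if (j : ℕ) = 0 then ((q : ℚ) ^ e) ^ (r - (i : ℕ))
  else if (j : ℕ) = r then ((q : ℚ) ^ e) ^ (i : ℕ)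
  else ((q : ℚ) ^ e) ^ (r - (min (j : ℕ) (r - (j : ℕ)) + Nat.dist (i : ℕ) (j : ℕ))) *
    ((q : ℚ) - 1)

/-- The matrix `Λ(r)`. -/
def lambdaMat (q e r : ℕ) : Matrix (Fin (r + 1)) (Fin (r + 1)) ℚ :=
  Matrix.transpose (lambdaT q e r)

/-- The standard basis vector `e_i` of `ℚ^{r+1}` scaled by `c`. -/
def basisVec (r : ℕ) (i : Fin (r + 1)) (c : ℚ) : Fin (r + 1) → ℚ := Pi.single i c

lemma mulVec_basis {r : ℕ} (q e : ℕ) (a : Fin (r+1)) (c : ℚ) (i : Fin (r+1)) :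
    (lambdaMat q e r).mulVec (basisVec r a c) i = lambdaT q e r a i * c := by
  rw [basisVec, Matrix.mulVec_single]
  rfl

lemma basisVec_apply {r : ℕ} (a : Fin (r+1)) (c : ℚ) (i : Fin (r+1)) :
    basisVec r a c i = if (i : ℕ) = (a : ℕ) then c else 0 := by
  simp [basisVec, Pi.single_apply, Fin.ext_iff]

lemma sum_basis_apply {r : ℕ} (a b : ℕ) (hb : b ≤ r) (c : ℕ → ℚ) (i : Fin (r+1)) :
    (∑ k ∈ Finset.Icc a b, basisVec r (Fin.ofNat (r+1) k) (c k)) i =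
      if (i : ℕ) ∈ Finset.Icc a b then c i else 0 := by
  rw [Finset.sum_apply]
  rw [Finset.sum_congr rfl (fun k hk => ?_), Finset.sum_ite_eq]
  have hk' : ((Fin.ofNat (r+1) k : Fin (r+1)) : ℕ) = k := by
    rw [Fin.val_ofNat]
    exact Nat.mod_eq_of_lt (by have := (Finset.mem_Icc.mp hk).2; omega)
  simp [basisVec, Pi.single_apply, Fin.ext_iff, hk', eq_comm,
    (by rw [Fin.val_ofNat] at hk'; exact hk' : k % (r+1) = k)]

/-- For `𝔭 = T` (so `P = q`, `e = 1`) and `r ≥ 4`: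
`Λ(r)·(−q e_0 + e_1 + e_{r−2} − e_{r−1} + (q−1) e_r) = (q²−1)(q−1)·d`, where
`d = −(Σ_{k=0}^{r−2} q^k) e_0 + e_1 + Σ_{k=2}^{⌊r/2⌋} e_k
+ Σ_{k=⌊r/2⌋+1}^{r−2} q^{2k−r} e_k + q^{r−2} e_r`:
the identity `g(D_1) = (Δ^{−q} Δ_T Δ_{T^{r−2}} Δ_{T^{r−1}}^{−1} Δ_{T^r}^{q−1})^{1/((q²−1)(q−1))}`,
showing `(q−1)D_1` is trivial in `C(T^r)`. -/
theorem g_of_D_one (q : ℕ) (hq : 2 ≤ q) (r : ℕ) (hr : 4 ≤ r) :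
    (lambdaMat q 1 r).mulVec
        (basisVec r ⟨0, by omega⟩ (-(q : ℚ)) +
          basisVec r ⟨1, by omega⟩ 1 +
          basisVec r ⟨r - 2, by omega⟩ 1 -
          basisVec r ⟨r - 1, by omega⟩ 1 +
          basisVec r ⟨r, by omega⟩ ((q : ℚ) - 1)) =
      (((q : ℚ) ^ 2 - 1) * ((q : ℚ) - 1)) •
        (basisVec r ⟨0, by omega⟩ (-(∑ k ∈ Finset.range (r - 1), (q : ℚ) ^ k)) +
          basisVec r ⟨1, by omega⟩ 1 +
          (∑ k ∈ Finset.Icc 2 (r / 2), basisVec r (Fin.ofNat (r + 1) k) 1) +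
          (∑ k ∈ Finset.Icc (r / 2 + 1) (r - 2), basisVec r (Fin.ofNat (r + 1) k)
            ((q : ℚ) ^ (2 * k - r))) +
          basisVec r ⟨r, by omega⟩ ((q : ℚ) ^ (r - 2))) := by
  obtain ⟨s, rfl⟩ : ∃ s, r = s + 4 := ⟨r - 4, by omega⟩
  funext i
  simp only [Matrix.mulVec_add, Matrix.mulVec_sub, Pi.add_apply, Pi.sub_apply, Pi.smul_apply,
    smul_eq_mul, mulVec_basis, basisVec_apply, sum_basis_apply _ _ (by omega : s+2 ≤ s+4),
    sum_basis_apply _ _ (by omega : (s+4)/2 ≤ s+4), lambdaT, Finset.mem_Icc, pow_one,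
    show s+4-2 = s+2 from by omega, show s+4-1 = s+3 from by omega]
  obtain ⟨n, hn⟩ := i
  simp only []

  -- six cases on n
  by_cases h0 : n = 0
  · subst h0
    have h4 : ¬ (0 = s + 4) := by omega
    simp only [if_true, eq_self_iff_true, if_pos rfl, if_neg h4, if_neg (by omega : ¬ (0 = 1)),
      if_neg (by omega : ¬ (2 ≤ 0 ∧ 0 ≤ (s+4)/2)),
      if_neg (by omega : ¬ ((s+4)/2 + 1 ≤ 0 ∧ 0 ≤ s+2)),
      show s + 4 - 0 = s + 4 from by omega,
      show s + 4 - (s+2) = 2 from by omega,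
      show s + 4 - (s+3) = 1 from by omega,
      show s + 4 - (s+4) = 0 from by omega]
    have hg := geom_sum_mul (q : ℚ) (s+3)
    linear_combination ((q:ℚ)^2 - 1) * hg
  by_cases h1 : n = 1
  · subst h1
    simp only [if_true, eq_self_iff_true, if_neg h0, if_neg (by omega : ¬ (1 = s + 4)), if_pos rfl,
      if_neg (by omega : ¬ (2 ≤ 1 ∧ 1 ≤ (s+4)/2)),
      if_neg (by omega : ¬ ((s+4)/2 + 1 ≤ 1 ∧ 1 ≤ s+2)),
      show s + 4 - (1 ⊓ (s + 4 - 1) + Nat.dist 0 1) = s + 2 from by simp only [Nat.dist]; omega,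
      show s + 4 - (1 ⊓ (s + 4 - 1) + Nat.dist 1 1) = s + 3 from by simp only [Nat.dist]; omega,
      show s + 4 - (1 ⊓ (s + 4 - 1) + Nat.dist (s+2) 1) = 2 from by simp only [Nat.dist]; omega,
      show s + 4 - (1 ⊓ (s + 4 - 1) + Nat.dist (s+3) 1) = 1 from by simp only [Nat.dist]; omega,
      show s + 4 - (1 ⊓ (s + 4 - 1) + Nat.dist (s+4) 1) = 0 from by simp only [Nat.dist]; omega]
    ring
  by_cases hm1 : 2 ≤ n ∧ n ≤ (s+4)/2
  · obtain ⟨ha, hb⟩ := hm1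
    simp only [if_true, eq_self_iff_true, if_neg h0, if_neg (by omega : ¬ (n = s + 4)), if_neg h1,
      if_pos (⟨ha, hb⟩ : 2 ≤ n ∧ n ≤ (s+4)/2),
      if_neg (by omega : ¬ ((s+4)/2 + 1 ≤ n ∧ n ≤ s+2)),
      show s + 4 - (n ⊓ (s + 4 - n) + Nat.dist 0 n) = s + 4 - 2*n from by simp only [Nat.dist]; omega,
      show s + 4 - (n ⊓ (s + 4 - n) + Nat.dist 1 n) = s + 4 - 2*n + 1 from by simp only [Nat.dist]; omega,
      show s + 4 - (n ⊓ (s + 4 - n) + Nat.dist (s+2) n) = 2 from by simp only [Nat.dist]; omega,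
      show s + 4 - (n ⊓ (s + 4 - n) + Nat.dist (s+3) n) = 1 from by simp only [Nat.dist]; omega,
      show s + 4 - (n ⊓ (s + 4 - n) + Nat.dist (s+4) n) = 0 from by simp only [Nat.dist]; omega]
    ring
  by_cases hm2 : (s+4)/2 + 1 ≤ n ∧ n ≤ s+2
  · obtain ⟨ha, hb⟩ := hm2
    simp only [if_true, eq_self_iff_true, if_neg h0, if_neg (by omega : ¬ (n = s + 4)), if_neg h1, if_neg hm1,
      if_pos (⟨ha, hb⟩ : (s+4)/2 + 1 ≤ n ∧ n ≤ s+2),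
      show s + 4 - (n ⊓ (s + 4 - n) + Nat.dist 0 n) = 0 from by simp only [Nat.dist]; omega,
      show s + 4 - (n ⊓ (s + 4 - n) + Nat.dist 1 n) = 1 from by simp only [Nat.dist]; omega,
      show s + 4 - (n ⊓ (s + 4 - n) + Nat.dist (s+2) n) = 2*n - (s+4) + 2 from by
        simp only [Nat.dist]; omega,
      show s + 4 - (n ⊓ (s + 4 - n) + Nat.dist (s+3) n) = 2*n - (s+4) + 1 from by
        simp only [Nat.dist]; omega,
      show s + 4 - (n ⊓ (s + 4 - n) + Nat.dist (s+4) n) = 2*n - (s+4) from by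
        simp only [Nat.dist]; omega]
    ring
  by_cases h3 : n = s + 3
  · subst h3
    simp only [if_true, eq_self_iff_true, if_neg h0, if_neg (by omega : ¬ (s + 3 = s + 4)), if_neg h1, if_neg hm1,
      if_neg hm2,
      show s + 4 - ((s+3) ⊓ (s + 4 - (s+3)) + Nat.dist 0 (s+3)) = 0 from by
        simp only [Nat.dist]; omega,
      show s + 4 - ((s+3) ⊓ (s + 4 - (s+3)) + Nat.dist 1 (s+3)) = 1 from by
        simp only [Nat.dist]; omega,
      show s + 4 - ((s+3) ⊓ (s + 4 - (s+3)) + Nat.dist (s+2) (s+3)) = s + 2 from by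
        simp only [Nat.dist]; omega,
      show s + 4 - ((s+3) ⊓ (s + 4 - (s+3)) + Nat.dist (s+3) (s+3)) = s + 3 from by
        simp only [Nat.dist]; omega,
      show s + 4 - ((s+3) ⊓ (s + 4 - (s+3)) + Nat.dist (s+4) (s+3)) = s + 2 from by
        simp only [Nat.dist]; omega]
    ring
  · have h4 : n = s + 4 := by omega
    subst h4
    simp only [if_true, eq_self_iff_true, if_neg h0, if_pos rfl, if_neg h1, if_neg hm1, if_neg hm2]
    ring
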